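/- Let F be a field of characteristic 0, let Γ = F[x,y]/(x² + y⁴ − 1), and let D be the derivation of Γ induced by 2y³ ∂/∂x − x ∂/∂y. Then Γ is differentially simple with respect to D: every nonzero ideal I of Γ with D(I) ⊆ I equals Γ. -/

import Mathlib

set_option synthInstance.maxHeartbeats 400000

open MvPolynomial

/-- The derivation `D = 2y³ ∂/∂x − x ∂/∂y` of `F[x,y]`. -/
noncomputable def Dxy (F : Type*) [Field F] :
    Derivation F (MvPolynomial (Fin 2) F) (MvPolynomial (Fin 2) F) :=
  mkDerivation F ![2 * X 1 ^ 3, - X 0]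

/-- The quotient ring `Γ = F[x,y]/(x² + y⁴ − 1)`. -/
abbrev Gam (F : Type*) [Field F] : Type _ :=
  MvPolynomial (Fin 2) F ⧸
    Ideal.span {(X 0 ^ 2 + X 1 ^ 4 - 1 : MvPolynomial (Fin 2) F)}

/-!
Every element of `Γ` is `a(y) + b(y)x` with `a, b ∈ F[y]`. For a nonzero `D`-invariant ideal `I`,
the contraction `K = I ∩ F[y]` is nonzero: it contains the norm `a² - (1 - y⁴)b²` of a nonzero
element of `I`, which cannot vanish because `1 - y⁴` has a simple root. Since `D(a(y)) = -a'(y)x`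
and `x² = 1 - y⁴`, the ideal `K` is stable under `a ↦ (1 - y⁴)a'` and `a ↦ (1 - y⁴)a'' - 2y³a'`.
If `p` is an irreducible factor of multiplicity `m` of a generator of `K`, the first operator forces
`p ∣ 1 - y⁴` and the second then forces `p ∣ (4m - 2)y³`; in characteristic `0` this gives
`p ∣ y`, which is incompatible with `p ∣ 1 - y⁴`. Hence `K = F[y]` and `I = Γ`.
-/

namespace Polynomial

variable {F : Type*} [Field F]

theorem derivative_pow_succ_mul (p u : F[X]) (k : ℕ) :
    derivative (p ^ (k + 1) * u) =
      p ^ k * ((k + 1) * (derivative p * u) + p * derivative u) := by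
  rw [derivative_mul, derivative_pow_succ, C_add, C_1, map_natCast]
  ring

theorem _root_.Irreducible.isCoprime_derivative_mul_add [CharZero F] {p u : F[X]}
    (hp : Irreducible p) (hpu : ¬ p ∣ u) (k : ℕ) :
    IsCoprime p ((k + 1) * (derivative p * u) + p * derivative u) := by
  have hk : IsUnit ((k + 1 : F[X])) := by
    rw [← Nat.cast_succ, ← map_natCast C]
    exact isUnit_C.mpr (Nat.cast_ne_zero.mpr k.succ_ne_zero).isUnit
  refine IsCoprime.add_mul_left_right ?_ _
  rw [isCoprime_mul_unit_left_right hk]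
  exact hp.separable.mul_right (hp.coprime_iff_not_dvd.mpr hpu)

/-- Writing `c g' = g h` and `m = k + 1` for the exact multiplicity of `p` in `g`, the first
divisibility gives `h ≡ m c' (mod p)`, and differentiating `c g' = g h` turns the second into
`h ≡ c' - r (mod p)`. -/
theorem _root_.Irreducible.dvd_and_exists_dvd_natCast_mul_derivative_add [CharZero F]
    {c r g p : F[X]}
    (hp : Irreducible p) (hpg : p ∣ g) (hg : g ≠ 0) (hc : g ∣ c * derivative g)
    (hr : g ∣ c * derivative (derivative g) + r * derivative g) :
    p ∣ c ∧ ∃ k : ℕ, p ∣ k * derivative c + r := by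
  obtain ⟨m, u, hpu, hgu⟩ := WfDvdMonoid.max_power_factor hg hp
  obtain ⟨k, rfl⟩ : ∃ k, m = k + 1 := by
    refine Nat.exists_eq_add_one.mpr (Nat.pos_of_ne_zero ?_)
    rintro rfl
    exact hpu (by simpa [hgu] using hpg)
  set s := (k + 1) * (derivative p * u) + p * derivative u with hs
  have hgs : derivative g = p ^ k * s := hgu ▸ derivative_pow_succ_mul p u k
  have hps : IsCoprime p s := hp.isCoprime_derivative_mul_add hpu k
  have hcancel : ∀ t, g ∣ p ^ k * t → p ∣ t := fun t ht =>
    (dvd_mul_right p u).trans <| (mul_dvd_mul_iff_left (pow_ne_zero k hp.ne_zero)).mp <| by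
      rwa [← mul_assoc, ← pow_succ, ← hgu]
  obtain ⟨h, hh⟩ := hc
  have hpc : p ∣ c :=
    hps.dvd_of_dvd_mul_right (hcancel _ ⟨h, by linear_combination hh - c * hgs⟩)
  refine ⟨hpc, k, ?_⟩
  have hsecond : p ∣ h - derivative c + r := by
    refine hps.dvd_of_dvd_mul_left (hcancel _ ?_)
    have hh' := congrArg derivative hh
    rw [derivative_mul, derivative_mul] at hh'
    rw [← mul_assoc, ← hgs, show derivative g * (h - derivative c + r) =
      c * derivative (derivative g) + r * derivative g - g * derivative h by
        linear_combination -hh']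
    exact dvd_sub hr (dvd_mul_right _ _)
  obtain ⟨w, hw⟩ := hpc
  have hws : w * s = u * h := mul_left_cancel₀ (pow_ne_zero (k + 1) hp.ne_zero) (by
    linear_combination hh + h * hgu - p * w * hgs - derivative g * hw)
  have hfirst : p ∣ h - (k + 1) * derivative c := by
    refine (hp.coprime_iff_not_dvd.mpr hpu).dvd_of_dvd_mul_left
      ⟨w * derivative u - (k + 1) * u * derivative w, ?_⟩
    rw [hw, derivative_mul]
    linear_combination -hws + w * hs
  convert dvd_sub hsecond hfirst using 1
  ring

theorem eq_zero_of_mul_self_eq_mul_mul_self {a b c : F[X]} {t : F}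
    (hc : c.rootMultiplicity t = 1) (h : a * a = c * (b * b)) : b = 0 := by
  by_contra hb
  have hc0 : c ≠ 0 := by rintro rfl; simp at hc
  have hcbb : c * (b * b) ≠ 0 := mul_ne_zero hc0 (mul_ne_zero hb hb)
  have ha : a * a ≠ 0 := h ▸ hcbb
  have := congrArg (rootMultiplicity t) h
  rw [rootMultiplicity_mul ha, rootMultiplicity_mul hcbb,
    rootMultiplicity_mul (mul_ne_zero hb hb), hc] at this
  omega

theorem rootMultiplicity_one_sub_X_pow_four [CharZero F] :
    (1 - X ^ 4 : F[X]).rootMultiplicity 1 = 1 := by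
  have hc : (1 - X ^ 4 : F[X]) ≠ 0 := fun h => by simpa using congrArg (eval 0) h
  refine le_antisymm (not_lt.mp fun h => ?_) ((rootMultiplicity_pos hc).mpr (by simp))
  have := ((one_lt_rootMultiplicity_iff_isRoot hc).mp h).2
  norm_num at this

theorem isUnit_of_dvd_one_sub_X_pow_four_mul_derivative [CharZero F] {g : F[X]} (hg : g ≠ 0)
    (h1 : g ∣ (1 - X ^ 4) * derivative g)
    (h2 : g ∣ (1 - X ^ 4) * derivative (derivative g) - 2 * X ^ 3 * derivative g) :
    IsUnit g := by
  by_contra hu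
  obtain ⟨p, hp, hpg⟩ := WfDvdMonoid.exists_irreducible_factor hu hg
  obtain ⟨hpc, k, hpk⟩ := hp.dvd_and_exists_dvd_natCast_mul_derivative_add hpg hg h1
    (r := -(2 * X ^ 3)) (by simpa [sub_eq_add_neg] using h2)
  have hk : (k : F[X]) * derivative (1 - X ^ 4) + -(2 * X ^ 3) = C (-(4 * k + 2 : F)) * X ^ 3 := by
    simp only [derivative_sub, derivative_one, derivative_X_pow, map_neg, map_add, map_mul,
      map_natCast, map_ofNat]
    ring
  have hk0 : (-(4 * k + 2 : F)) ≠ 0 :=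
    neg_ne_zero.mpr (by exact_mod_cast (by omega : 4 * k + 2 ≠ 0))
  rw [hk, (isUnit_C.mpr hk0.isUnit).dvd_mul_left] at hpk
  have hpX : p ∣ X := hp.prime.dvd_of_dvd_pow hpk
  refine hp.not_isUnit (isUnit_of_dvd_one ?_)
  simpa using dvd_add hpc (dvd_pow hpX four_ne_zero)

theorem ideal_eq_top_of_one_sub_X_pow_four_mul_derivative_mem [CharZero F] {K : Ideal F[X]}
    (hK : K ≠ ⊥)
    (h1 : ∀ a ∈ K, (1 - X ^ 4) * derivative a ∈ K)
    (h2 : ∀ a ∈ K, (1 - X ^ 4) * derivative (derivative a) - 2 * X ^ 3 * derivative a ∈ K) :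
    K = ⊤ := by
  have hg := Submodule.IsPrincipal.generator_mem K
  refine K.eq_top_of_isUnit_mem hg (isUnit_of_dvd_one_sub_X_pow_four_mul_derivative ?_ ?_ ?_)
  · exact (Submodule.IsPrincipal.eq_bot_iff_generator_eq_zero K).not.mp hK
  · exact (Submodule.IsPrincipal.mem_iff_generator_dvd K).mp (h1 _ hg)
  · exact (Submodule.IsPrincipal.mem_iff_generator_dvd K).mp (h2 _ hg)

end Polynomial

namespace Gam

open scoped Polynomial

variable (F : Type*) [Field F]

noncomputable def x : Gam F := Ideal.Quotient.mk _ (X 0)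

noncomputable def y : Gam F := Ideal.Quotient.mk _ (X 1)

theorem x_sq_add_y_pow_four : x F ^ 2 + y F ^ 4 = 1 := by
  have h : Ideal.Quotient.mk (Ideal.span {(X 0 ^ 2 + X 1 ^ 4 - 1 : MvPolynomial (Fin 2) F)})
      (X 0 ^ 2 + X 1 ^ 4 - 1) = 0 :=
    Ideal.Quotient.eq_zero_iff_mem.mpr (Ideal.subset_span rfl)
  rw [map_sub, map_add, map_pow, map_pow, map_one, sub_eq_zero] at h
  exact h

theorem x_sq : x F ^ 2 = Polynomial.aeval (y F) (1 - Polynomial.X ^ 4 : F[X]) := by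
  simp only [map_sub, map_one, map_pow, Polynomial.aeval_X]
  linear_combination x_sq_add_y_pow_four F

theorem exists_eq_aeval_add_aeval_mul_x (z : Gam F) :
    ∃ a b : F[X], z = Polynomial.aeval (y F) a + Polynomial.aeval (y F) b * x F := by
  obtain ⟨p, rfl⟩ := Ideal.Quotient.mk_surjective z
  induction p using MvPolynomial.induction_on with
  | C r =>
    refine ⟨Polynomial.C r, 0, ?_⟩
    rw [map_zero, zero_mul, add_zero, Polynomial.aeval_C, ← MvPolynomial.algebraMap_eq,
      Ideal.Quotient.mk_algebraMap]
  | add p q hp hq =>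
    obtain ⟨a, b, hab⟩ := hp
    obtain ⟨a', b', hab'⟩ := hq
    exact ⟨a + a', b + b', by rw [map_add, hab, hab']; simp only [map_add]; ring⟩
  | mul_X p i hp =>
    obtain ⟨a, b, hab⟩ := hp
    rw [map_mul, hab]
    fin_cases i
    · refine ⟨(1 - Polynomial.X ^ 4) * b, a, ?_⟩
      change _ * x F = _
      rw [map_mul, ← x_sq]
      ring
    · refine ⟨Polynomial.X * a, Polynomial.X * b, ?_⟩
      change _ * y F = _
      simp only [map_mul, Polynomial.aeval_X]
      ring

/-- The ideal `I ∩ F[y]`, with `F[X]` mapped onto the subring `F[y]` of `Γ`. -/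
noncomputable def contraction (I : Ideal (Gam F)) : Ideal F[X] :=
  I.comap (Polynomial.aeval (R := F) (y F))

theorem mem_contraction {I : Ideal (Gam F)} {a : F[X]} :
    a ∈ contraction F I ↔ Polynomial.aeval (y F) a ∈ I :=
  Iff.rfl

theorem contraction_ne_bot [CharZero F] {I : Ideal (Gam F)} (hI : I ≠ ⊥) :
    contraction F I ≠ ⊥ := by
  obtain ⟨z, hzI, hz⟩ := Submodule.exists_mem_ne_zero_of_ne_bot hI
  obtain ⟨a, b, rfl⟩ := exists_eq_aeval_add_aeval_mul_x F z
  have hnorm : a * a - (1 - Polynomial.X ^ 4) * (b * b) ∈ contraction F I := by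
    rw [mem_contraction, show Polynomial.aeval (y F) (a * a - (1 - Polynomial.X ^ 4) * (b * b)) =
        (Polynomial.aeval (y F) a - Polynomial.aeval (y F) b * x F) *
          (Polynomial.aeval (y F) a + Polynomial.aeval (y F) b * x F) by
      rw [map_sub, map_mul, map_mul, map_mul, ← x_sq]; ring]
    exact I.mul_mem_left _ hzI
  refine fun hbot => hz ?_
  rw [hbot, Ideal.mem_bot, sub_eq_zero] at hnorm
  obtain rfl := Polynomial.eq_zero_of_mul_self_eq_mul_mul_self
    Polynomial.rootMultiplicity_one_sub_X_pow_four hnorm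
  obtain rfl : a = 0 := mul_self_eq_zero.mp (by simpa using hnorm)
  simp

section Derivation

variable {F} {D : Derivation F (Gam F) (Gam F)}

theorem derivation_x (hD : ∀ p : MvPolynomial (Fin 2) F,
      D (Ideal.Quotient.mk _ p) = Ideal.Quotient.mk _ (Dxy F p)) :
    D (x F) = 2 * y F ^ 3 := by
  rw [x, hD, Dxy, mkDerivation_X]
  simp only [Matrix.cons_val_zero, map_mul, map_pow, map_ofNat]
  rfl

theorem derivation_y (hD : ∀ p : MvPolynomial (Fin 2) F,
      D (Ideal.Quotient.mk _ p) = Ideal.Quotient.mk _ (Dxy F p)) :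
    D (y F) = -x F := by
  rw [y, hD, Dxy, mkDerivation_X]
  simp [x]

theorem derivation_aeval_y (hy : D (y F) = -x F) (a : F[X]) :
    D (Polynomial.aeval (y F) a) = -(Polynomial.aeval (y F) (Polynomial.derivative a) * x F) := by
  rw [Derivation.comp_aeval_eq, hy, smul_eq_mul]
  ring

theorem derivation_aeval_y_mul_x (hx : D (x F) = 2 * y F ^ 3) (hy : D (y F) = -x F)
    (b : F[X]) :
    D (Polynomial.aeval (y F) b * x F) = Polynomial.aeval (y F)
      (2 * Polynomial.X ^ 3 * b - (1 - Polynomial.X ^ 4) * Polynomial.derivative b) := by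
  rw [Derivation.leibniz, derivation_aeval_y hy, hx, smul_eq_mul, smul_eq_mul, map_sub, map_mul,
    map_mul, map_mul, ← x_sq]
  simp only [map_pow, map_ofNat, Polynomial.aeval_X]
  ring

variable {I : Ideal (Gam F)}

theorem mul_derivative_mem_contraction (hy : D (y F) = -x F) (hI : ∀ a ∈ I, D a ∈ I)
    {a : F[X]} (ha : a ∈ contraction F I) :
    (1 - Polynomial.X ^ 4) * Polynomial.derivative a ∈ contraction F I := by
  rw [mem_contraction] at ha ⊢
  have h := I.mul_mem_left (-x F) (hI _ ha)
  rw [derivation_aeval_y hy] at h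
  convert h using 1
  rw [map_mul, ← x_sq]
  ring

theorem mul_derivative_derivative_sub_mem_contraction (hx : D (x F) = 2 * y F ^ 3)
    (hy : D (y F) = -x F) (hI : ∀ a ∈ I, D a ∈ I) {a : F[X]} (ha : a ∈ contraction F I) :
    (1 - Polynomial.X ^ 4) * Polynomial.derivative (Polynomial.derivative a) -
      2 * Polynomial.X ^ 3 * Polynomial.derivative a ∈ contraction F I := by
  rw [mem_contraction] at ha ⊢
  have h := hI _ (hI _ ha)
  rw [derivation_aeval_y hy, map_neg, derivation_aeval_y_mul_x hx hy, ← map_neg] at h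
  convert h using 2
  ring

end Derivation

end Gam

theorem stmt4 (F : Type*) [Field F] [CharZero F]
    (D' : Derivation F (Gam F) (Gam F))
    (hD' : ∀ p : MvPolynomial (Fin 2) F,
      D' (Ideal.Quotient.mk _ p) = Ideal.Quotient.mk _ (Dxy F p))
    (I : Ideal (Gam F)) (hI : I ≠ ⊥) (hinv : ∀ a ∈ I, D' a ∈ I) :
    I = ⊤ := by
  have hx := Gam.derivation_x hD'
  have hy := Gam.derivation_y hD'
  have hK : Gam.contraction F I = ⊤ :=
    Polynomial.ideal_eq_top_of_one_sub_X_pow_four_mul_derivative_mem (Gam.contraction_ne_bot F hI)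
      (fun _ ha => Gam.mul_derivative_mem_contraction hy hinv ha)
      (fun _ ha => Gam.mul_derivative_derivative_sub_mem_contraction hx hy hinv ha)
  exact Ideal.comap_eq_top_iff.mp hK
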